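/- In the setting of the previous greedy theorem with a single resource type absent (i.e., R lists D_1,…,D_R plus the 'all' list D_0, each sorted decreasingly by reward, and all m_i = m equal): in each round, choosing max(r(D_0[0]), ∑_{i=1}^{R} r(D_i[0])) and removing the corresponding item(s) yields, after m rounds, total reward at least that of any assignment in which each resource serves at most one demand and a demand in D_0 consumes one resource of every type while a demand in D_i consumes one resource of type i. -/

import Mathlib

/-
Only the numbers of demands served matter: a feasible assignment is dominated by the one that
serves, in each list, the same number of demands from the top. Such a "prefix assignment"
`(a, b)` with `a + b i ≤ m` is then compared with the greedy by induction on `m`. If the greedy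
serves the head of `D_0`, the assignment either serves it too, or it serves no demand of `D_0`
and gives up the top demand of every `D_i`, which together are worth at most that head.
If the greedy serves the heads of all `D_i`, the assignment either has room in every `D_i`
(a prefix of `D_i` is worth at most its head plus a prefix of its tail), or it spends all `m + 1`
rounds on `D_0` and gives up one demand there, worth at most the sum of the heads.
-/

open Finset

/-- One round per remaining resource: serve either the best demand of `D_0`
(requiring all types) or the best remaining demand of each `D_i`. -/
noncomputable def greedyRounds {R : ℕ} : ℕ → List ℝ → (Fin R → List ℝ) → ℝ
  | 0, _, _ => 0
  | m + 1, L0, Ls =>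
      if (∑ i : Fin R, (Ls i).headI) ≤ L0.headI then
        L0.headI + greedyRounds m L0.tail Ls
      else
        (∑ i : Fin R, (Ls i).headI) + greedyRounds m L0 (fun i => (Ls i).tail)

theorem Finset.sum_le_sum_range_card_of_antitone {M : Type*} [AddCommMonoid M] [PartialOrder M]
    [IsOrderedAddMonoid M] {f : ℕ → M} (hf : Antitone f) (S : Finset ℕ) :
    ∑ j ∈ S, f j ≤ ∑ j ∈ range #S, f j := by
  induction S using Finset.induction_on_max with
  | empty => simp
  | insert x s hlt ih =>
    have hx : x ∉ s := fun hx => lt_irrefl x (hlt x hx)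
    have hcard : #s ≤ x := by
      simpa using card_le_card fun y hy => mem_range.mpr (hlt y hy)
    rw [sum_insert hx, card_insert_of_notMem hx, sum_range_succ, add_comm]
    exact add_le_add ih (hf hcard)

namespace List

theorem antitone_getD_zero {L : List ℝ} (hs : L.Pairwise (· ≥ ·)) (hn : ∀ x ∈ L, 0 ≤ x) :
    Antitone fun j => L.getD j 0 := by
  intro j₁ j₂ h
  by_cases h₂ : j₂ < L.length
  · have h₁ : j₁ < L.length := lt_of_le_of_lt h h₂
    simp only [getD_eq_getElem _ _ h₁, getD_eq_getElem _ _ h₂]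
    rcases h.eq_or_lt with rfl | hlt
    · rfl
    · exact pairwise_iff_getElem.mp hs j₁ j₂ h₁ h₂ hlt
  · simp only [getD_eq_default _ _ (not_lt.mp h₂)]
    by_cases h₁ : j₁ < L.length
    · simpa only [getD_eq_getElem _ _ h₁] using hn _ (getElem_mem h₁)
    · simp only [getD_eq_default _ _ (not_lt.mp h₁), le_refl]

theorem sum_take_eq_sum_range_getD (L : List ℝ) (k : ℕ) :
    (L.take k).sum = ∑ j ∈ Finset.range k, L.getD j 0 := by
  induction L generalizing k with
  | nil => simp
  | cons a l ih =>
    cases k with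
    | zero => simp
    | succ k => simp [Finset.sum_range_succ', ih, add_comm]

theorem sum_getD_le_sum_take {L : List ℝ} (hs : L.Pairwise (· ≥ ·)) (hn : ∀ x ∈ L, 0 ≤ x)
    (S : Finset ℕ) : ∑ j ∈ S, L.getD j 0 ≤ (L.take #S).sum := by
  rw [sum_take_eq_sum_range_getD]
  exact sum_le_sum_range_card_of_antitone (antitone_getD_zero hs hn) S

theorem sum_take_tail_le {L : List ℝ} (hs : L.Pairwise (· ≥ ·)) (hn : ∀ x ∈ L, 0 ≤ x) (k : ℕ) :
    (L.tail.take k).sum ≤ (L.take k).sum := by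
  induction k generalizing L with
  | zero => simp
  | succ k ih =>
    match L, hs, hn with
    | [], _, _ => simp
    | [x], _, hn => simpa using hn x (by simp)
    | x :: y :: t, hs, hn =>
      have hyx : y ≤ x := rel_of_pairwise_cons hs (mem_cons_self ..)
      have htail := ih hs.of_cons fun z hz => hn z (mem_cons_of_mem x hz)
      simp only [tail_cons, take_succ_cons, sum_cons] at htail ⊢
      linarith

theorem sum_take_le_headI_add_sum_take_tail {L : List ℝ} (hn : ∀ x ∈ L, 0 ≤ x) (k : ℕ) :
    (L.take k).sum ≤ L.headI + (L.tail.take (k - 1)).sum := by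
  match L, k with
  | [], _ => simp only [take_nil, tail_nil, sum_nil, headI_nil, add_zero]; rfl
  | a :: l, 0 => simpa using hn a mem_cons_self
  | a :: l, k + 1 => simp

theorem sum_take_le_headI_add_sum_take_pred {L : List ℝ} (hs : L.Pairwise (· ≥ ·))
    (hn : ∀ x ∈ L, 0 ≤ x) (k : ℕ) : (L.take k).sum ≤ L.headI + (L.take (k - 1)).sum := by
  linarith [sum_take_le_headI_add_sum_take_tail hn k, sum_take_tail_le hs hn (k - 1)]

end List

section Greedy

variable {R : ℕ}

noncomputable def prefixValue (L0 : List ℝ) (Ls : Fin R → List ℝ) (a : ℕ) (b : Fin R → ℕ) : ℝ :=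
  (L0.take a).sum + ∑ i, ((Ls i).take (b i)).sum

def PrefixFeasible (m a : ℕ) (b : Fin R → ℕ) : Prop :=
  a ≤ m ∧ ∀ i, a + b i ≤ m

theorem prefixValue_le_headI_add {m a : ℕ} {b : Fin R → ℕ} {L0 : List ℝ} {Ls : Fin R → List ℝ}
    (hc : ∑ i, (Ls i).headI ≤ L0.headI) (h0n : ∀ x ∈ L0, 0 ≤ x)
    (hs : ∀ i, (Ls i).Pairwise (· ≥ ·)) (hn : ∀ i, ∀ x ∈ Ls i, 0 ≤ x)
    (hab : PrefixFeasible (m + 1) a b) :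
    ∃ a' b', PrefixFeasible m a' b' ∧
      prefixValue L0 Ls a b ≤ L0.headI + prefixValue L0.tail Ls a' b' := by
  obtain ⟨ham, hb⟩ := hab
  rcases Nat.eq_zero_or_pos a with rfl | hapos
  · refine ⟨0, fun i => b i - 1,
      ⟨Nat.zero_le m, fun i => by dsimp only; have := hb i; omega⟩, ?_⟩
    have hexchange : ∑ i, ((Ls i).take (b i)).sum ≤
        ∑ i, (Ls i).headI + ∑ i, ((Ls i).take (b i - 1)).sum :=
      (sum_le_sum fun i _ => List.sum_take_le_headI_add_sum_take_pred (hs i) (hn i) (b i)).trans_eq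
        sum_add_distrib
    simp only [prefixValue, List.take_zero, List.sum_nil, zero_add]
    linarith
  · refine ⟨a - 1, b, ⟨by omega, fun i => by have := hb i; omega⟩, ?_⟩
    unfold prefixValue
    linarith [List.sum_take_le_headI_add_sum_take_tail h0n a]

theorem prefixValue_le_sum_headI_add {m a : ℕ} {b : Fin R → ℕ} {L0 : List ℝ}
    {Ls : Fin R → List ℝ} (hc : L0.headI ≤ ∑ i, (Ls i).headI) (h0s : L0.Pairwise (· ≥ ·))
    (h0n : ∀ x ∈ L0, 0 ≤ x) (hn : ∀ i, ∀ x ∈ Ls i, 0 ≤ x) (hab : PrefixFeasible (m + 1) a b) :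
    ∃ a' b', PrefixFeasible m a' b' ∧
      prefixValue L0 Ls a b ≤ ∑ i, (Ls i).headI + prefixValue L0 (fun i => (Ls i).tail) a' b' := by
  obtain ⟨ha, hb⟩ := hab
  by_cases ham : a ≤ m
  · refine ⟨a, fun i => b i - 1, ⟨ham, fun i => by dsimp only; have := hb i; omega⟩, ?_⟩
    have hexchange : ∑ i, ((Ls i).take (b i)).sum ≤
        ∑ i, (Ls i).headI + ∑ i, ((Ls i).tail.take (b i - 1)).sum :=
      (sum_le_sum fun i _ => List.sum_take_le_headI_add_sum_take_tail (hn i) (b i)).trans_eq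
        sum_add_distrib
    unfold prefixValue
    linarith
  · obtain rfl : a = m + 1 := by omega
    have hb0 : ∀ i, b i = 0 := fun i => by have := hb i; omega
    refine ⟨m, 0, ⟨le_rfl, fun i => by simp⟩, ?_⟩
    have hexchange := List.sum_take_le_headI_add_sum_take_pred h0s h0n (m + 1)
    simp only [prefixValue, hb0, Pi.zero_apply, List.take_zero, List.sum_nil, sum_const_zero,
      add_zero, Nat.add_sub_cancel] at hexchange ⊢
    linarith

theorem prefixValue_le_greedyRounds {m a : ℕ} {b : Fin R → ℕ} {L0 : List ℝ}
    {Ls : Fin R → List ℝ} (h0s : L0.Pairwise (· ≥ ·)) (h0n : ∀ x ∈ L0, 0 ≤ x)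
    (hs : ∀ i, (Ls i).Pairwise (· ≥ ·)) (hn : ∀ i, ∀ x ∈ Ls i, 0 ≤ x)
    (hab : PrefixFeasible m a b) : prefixValue L0 Ls a b ≤ greedyRounds m L0 Ls := by
  induction m generalizing a b L0 Ls with
  | zero =>
    obtain rfl : a = 0 := Nat.le_zero.mp hab.1
    have hb : ∀ i, b i = 0 := fun i => by have := hab.2 i; omega
    simp [prefixValue, greedyRounds, hb]
  | succ m ih =>
    rw [greedyRounds]
    split_ifs with hc
    · obtain ⟨a', b', hab', hle⟩ := prefixValue_le_headI_add hc h0n hs hn hab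
      linarith [ih h0s.tail (fun x hx => h0n x (List.mem_of_mem_tail hx)) hs hn hab']
    · obtain ⟨a', b', hab', hle⟩ := prefixValue_le_sum_headI_add (not_le.mp hc).le h0s h0n hn hab
      linarith [ih h0s h0n (fun i => (hs i).tail)
        (fun i x hx => hn i x (List.mem_of_mem_tail hx)) hab']

end Greedy

theorem greedy_rounds_optimal_general {R : ℕ} (hR : 0 < R) (m : ℕ)
    (L0 : List ℝ) (Ls : Fin R → List ℝ)
    (h0sorted : L0.Pairwise (· ≥ ·)) (hsorted : ∀ i, (Ls i).Pairwise (· ≥ ·))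
    (h0pos : ∀ x ∈ L0, 0 ≤ x) (hpos : ∀ i, ∀ x ∈ Ls i, 0 ≤ x)
    (S0 : Finset ℕ) (Si : Fin R → Finset ℕ)
    (hcard : ∀ i, S0.card + (Si i).card ≤ m) :
    (∑ j ∈ S0, L0.getD j 0) + (∑ i : Fin R, ∑ j ∈ Si i, (Ls i).getD j 0) ≤
      greedyRounds m L0 Ls :=
  calc (∑ j ∈ S0, L0.getD j 0) + (∑ i : Fin R, ∑ j ∈ Si i, (Ls i).getD j 0)
      ≤ prefixValue L0 Ls #S0 fun i => #(Si i) :=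
        add_le_add (List.sum_getD_le_sum_take h0sorted h0pos S0)
          (sum_le_sum fun i _ => List.sum_getD_le_sum_take (hsorted i) (hpos i) (Si i))
    _ ≤ greedyRounds m L0 Ls :=
        prefixValue_le_greedyRounds h0sorted h0pos hsorted hpos
          ⟨le_self_add.trans (hcard ⟨0, hR⟩), hcard⟩

/-- Exchange-greedy Algorithm E is optimal when all resource counts equal `m`:
its total reward is at least that of any feasible assignment, i.e. any choice
of `S_0 ⊆ D_0` and `S_i ⊆ D_i` with `|S_0| + |S_i| ≤ m` for every `i`. -/
theorem greedy_rounds_optimal {R : ℕ} (hR : 0 < R) (m : ℕ)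
    (L0 : List ℝ) (Ls : Fin R → List ℝ)
    (h0sorted : L0.Pairwise (· ≥ ·)) (hsorted : ∀ i, (Ls i).Pairwise (· ≥ ·))
    (h0pos : ∀ x ∈ L0, 0 ≤ x) (hpos : ∀ i, ∀ x ∈ Ls i, 0 ≤ x)
    (S0 : Finset ℕ) (Si : Fin R → Finset ℕ)
    (hS0 : ∀ j ∈ S0, j < L0.length)
    (hSi : ∀ i, ∀ j ∈ Si i, j < (Ls i).length)
    (hcard : ∀ i, S0.card + (Si i).card ≤ m) :
    (∑ j ∈ S0, L0.getD j 0) + (∑ i : Fin R, ∑ j ∈ Si i, (Ls i).getD j 0) ≤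
      greedyRounds m L0 Ls :=
  greedy_rounds_optimal_general hR m L0 Ls h0sorted hsorted h0pos hpos S0 Si hcard
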